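/- arXiv:2511.18476 — 8 statements merged into one kernel-verified Lean document; each statement's English description precedes it below -/
import Mathlib

section
/- A full-support stochastic choice correspondence μ has a Logit representation (i.e., there exists π: nonempty subsets of X → ℝ₊₊ with μ(T,S) = π(T) / Σ_{T'⊆S, T'≠∅} π(T') for all nonempty T ⊆ S) if and only if μ satisfies Independence of Irrelevant Sets: μ(T,S)/μ(T',S) = μ(T,S')/μ(T',S') for all nonempty T,T' ⊆ S∩S' whenever both ratios are well defined and positive. -/
/-! Under a Logit representation `μ T S / μ T' S = π T / π T'` does not depend on the menu `S`,
which is IIS. Conversely, under full support IIS makes `μ · S` proportional to `π := μ · univ` on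
the subsets of every menu `S`, and since `μ · S` sums to one the factor is `1 / ∑ π`. -/

open Finset

variable {X : Type*} [Fintype X] [DecidableEq X]

def IsSCC (μ : Finset X → Finset X → ℝ) : Prop :=
  (∀ T S : Finset X, T ⊆ S → 0 ≤ μ T S ∧ μ T S ≤ 1) ∧
  (∀ S : Finset X, S.Nonempty →
      ∑ T ∈ S.powerset.filter (fun T => T.Nonempty), μ T S = 1) ∧
  (∀ T S : Finset X, ¬ T ⊆ S → μ T S = 0)

def FullSupport (μ : Finset X → Finset X → ℝ) : Prop :=
  ∀ T S : Finset X, T.Nonempty → T ⊆ S → 0 < μ T S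

def LogitRep (μ : Finset X → Finset X → ℝ) : Prop :=
  ∃ π : Finset X → ℝ,
    (∀ T : Finset X, T.Nonempty → 0 < π T) ∧
    ∀ T S : Finset X, T.Nonempty → T ⊆ S →
      μ T S = π T / ∑ T' ∈ S.powerset.filter (fun T' => T'.Nonempty), π T'

/-- Independence of Irrelevant Sets: the relative choice probability of two
collections is independent of the menu, whenever both ratios are well defined
and positive. -/
def IIS (μ : Finset X → Finset X → ℝ) : Prop :=
  ∀ T T' S S' : Finset X, T.Nonempty → T'.Nonempty →
    T ⊆ S ∩ S' → T' ⊆ S ∩ S' →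
    0 < μ T S → 0 < μ T' S → 0 < μ T S' → 0 < μ T' S' →
    μ T S / μ T' S = μ T S' / μ T' S'

lemma logit_denom_pos {Y : Type*} {π : Finset Y → ℝ}
    (hπ : ∀ T : Finset Y, T.Nonempty → 0 < π T) {T S : Finset Y} (hT : T.Nonempty) (hTS : T ⊆ S) :
    0 < ∑ T' ∈ S.powerset.filter (fun T' => T'.Nonempty), π T' :=
  sum_pos (fun U hU => hπ U (mem_filter.mp hU).2) ⟨T, mem_filter.mpr ⟨mem_powerset.mpr hTS, hT⟩⟩

lemma LogitRep.iis {Y : Type*} [DecidableEq Y] {μ : Finset Y → Finset Y → ℝ} (h : LogitRep μ) :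
    IIS μ := by
  obtain ⟨π, hπ, hμ⟩ := h
  have ratio : ∀ {T T' S : Finset Y}, T.Nonempty → T'.Nonempty → T ⊆ S → T' ⊆ S →
      μ T S / μ T' S = π T / π T' := by
    intro T T' S hT hT' hTS hT'S
    rw [hμ T S hT hTS, hμ T' S hT' hT'S,
      div_div_div_cancel_right₀ (logit_denom_pos hπ hT hTS).ne']
  intro T T' S S' hT hT' hTS hT'S _ _ _ _
  rw [subset_inter_iff] at hTS hT'S
  rw [ratio hT hT' hTS.1 hT'S.1, ratio hT hT' hTS.2 hT'S.2]

lemma IIS.mul_univ_eq {μ : Finset X → Finset X → ℝ} (h : IIS μ) (hfs : FullSupport μ)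
    {T T' S : Finset X} (hT : T.Nonempty) (hT' : T'.Nonempty) (hTS : T ⊆ S) (hT'S : T' ⊆ S) :
    μ T' S * μ T univ = μ T S * μ T' univ := by
  have hS : ∀ {U}, U.Nonempty → 0 < μ U univ := fun hU => hfs _ _ hU (subset_univ _)
  have := h T T' S univ hT hT' (by simpa using hTS) (by simpa using hT'S)
    (hfs T S hT hTS) (hfs T' S hT' hT'S) (hS hT) (hS hT')
  rw [div_eq_div_iff (hfs T' S hT' hT'S).ne' (hS hT').ne', mul_comm (μ T univ)] at this
  exact this.symm

lemma IIS.logitRep {μ : Finset X → Finset X → ℝ} (h : IIS μ) (hμ : IsSCC μ)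
    (hfs : FullSupport μ) : LogitRep μ := by
  refine ⟨fun T => μ T univ, fun T hT => hfs T univ hT (subset_univ T), ?_⟩
  intro T S hT hTS
  have hproportional : μ T univ = μ T S * ∑ T' ∈ S.powerset.filter (fun T' => T'.Nonempty),
      μ T' univ := by
    rw [mul_sum, ← one_mul (μ T univ), ← hμ.2.1 S (hT.mono hTS), sum_mul]
    refine sum_congr rfl fun T' hT' => ?_
    obtain ⟨hT'S, hT'⟩ := mem_filter.mp hT'
    exact h.mul_univ_eq hfs hT hT' hTS (mem_powerset.mp hT'S)
  show μ T S = μ T univ / _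
  rw [hproportional, mul_div_cancel_right₀ _
    (logit_denom_pos (fun U hU => hfs U univ hU (subset_univ U)) hT hTS).ne']

theorem logit_iff_IIS_general (μ : Finset X → Finset X → ℝ)
    (hμ : IsSCC μ) (hfs : FullSupport μ) :
    LogitRep μ ↔ IIS μ :=
  ⟨LogitRep.iis, fun h => h.logitRep hμ hfs⟩

theorem logit_iff_IIS (μ : Finset X → Finset X → ℝ)
    (hcard : 3 ≤ Fintype.card X) (hμ : IsSCC μ) (hfs : FullSupport μ) :
    LogitRep μ ↔ IIS μ :=
  logit_iff_IIS_general μ hμ hfs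
end

section
/- If a stochastic choice correspondence μ satisfies Positivity-1 and Relative Additivity, then for all S with x ∈ S, |S| ≥ 2, and all nonempty T ⊆ S\{x}: (i) μ(T, S\{x}) = 0 implies μ(T,S) + μ(T∪{x}, S) = 0, and (ii) μ(T, S\{x}) > 0 implies μ(T,S) + μ(T∪{x}, S) > 0. -/
/-!
Summing Relative Additivity over all nonempty `T' ⊆ S \ {x}` and using that `μ(·, S \ {x})` and
`μ(·, S)` are probability distributions gives
`μ(T, S) + μ(T ∪ {x}, S) = μ(T, S \ {x}) · (1 - μ({x}, S))`.
Positivity-1 at any `y ∈ S \ {x}` puts positive mass on some menu other than `{x}`, so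
`μ({x}, S) < 1`, and both claims follow.
-/

open Finset

variable {X : Type*} [Fintype X] [DecidableEq X]

def Positivity1 (μ : Finset X → Finset X → ℝ) : Prop :=
  ∀ (x : X) (S : Finset X), x ∈ S → ∃ T : Finset X, x ∈ T ∧ 0 < μ T S

def RelAdd (μ : Finset X → Finset X → ℝ) : Prop :=
  ∀ (x : X) (S T T' : Finset X), x ∈ S →
    T.Nonempty → T'.Nonempty → T ⊆ S.erase x → T' ⊆ S.erase x →
    μ T (S.erase x) * (μ T' S + μ (insert x T') S)
      = μ T' (S.erase x) * (μ T S + μ (insert x T) S)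

section

variable {α M : Type*} [DecidableEq α] [AddCommGroup M]

theorem Finset.sum_powerset_filter_nonempty (s : Finset α) (f : Finset α → M) :
    ∑ t ∈ s.powerset.filter (fun t => t.Nonempty), f t = ∑ t ∈ s.powerset, f t - f ∅ := by
  simp_rw [nonempty_iff_ne_empty, filter_ne', sum_erase_eq_sub (empty_mem_powerset s)]

theorem Finset.sum_powerset_filter_nonempty_eq_erase {a : α} {s : Finset α} (ha : a ∈ s)
    (f : Finset α → M) :
    ∑ t ∈ s.powerset.filter (fun t => t.Nonempty), f t =
      f {a} + ∑ t ∈ (s.erase a).powerset.filter (fun t => t.Nonempty), (f t + f (insert a t)) := by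
  rw [sum_powerset_filter_nonempty, sum_powerset_filter_nonempty, ← insert_erase ha,
    sum_powerset_insert (notMem_erase a s), erase_insert (notMem_erase a s), sum_add_distrib]
  simp only [insert_empty]
  abel

variable {μ : Finset α → Finset α → ℝ} {x : α} {S T : Finset α}

theorem IsSCC.subset_of_pos (hμ : IsSCC μ) (h : 0 < μ T S) : T ⊆ S := by
  by_contra hTS
  exact h.ne' (hμ.2.2 T S hTS)

theorem IsSCC.sum_add_insert_eq (hμ : IsSCC μ) (hx : x ∈ S) :
    ∑ T' ∈ (S.erase x).powerset.filter (fun T => T.Nonempty),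
      (μ T' S + μ (insert x T') S) = 1 - μ {x} S := by
  rw [eq_sub_iff_add_eq', ← sum_powerset_filter_nonempty_eq_erase hx fun A => μ A S]
  exact hμ.2.1 S ⟨x, hx⟩

theorem IsSCC.apply_singleton_lt_one (hμ : IsSCC μ) (hx : x ∈ S) (hT : T.Nonempty)
    (hTx : T ≠ {x}) (hTpos : 0 < μ T S) : μ {x} S < 1 := by
  have hle : μ {x} S + μ T S ≤ 1 := by
    rw [← hμ.2.1 S ⟨x, hx⟩]
    refine add_le_sum (fun A hA => (hμ.1 A S (mem_powerset.1 (mem_filter.1 hA).1)).1)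
      (mem_filter.2 ⟨mem_powerset.2 (singleton_subset_iff.2 hx), singleton_nonempty x⟩)
      (mem_filter.2 ⟨mem_powerset.2 (hμ.subset_of_pos hTpos), hT⟩) hTx.symm
  linarith

theorem Positivity1.apply_singleton_lt_one (hpos : Positivity1 μ) (hμ : IsSCC μ) (hx : x ∈ S)
    (hS : (S.erase x).Nonempty) : μ {x} S < 1 := by
  obtain ⟨y, hy⟩ := hS
  obtain ⟨T, hyT, hTpos⟩ := hpos y S (mem_of_mem_erase hy)
  refine hμ.apply_singleton_lt_one hx ⟨y, hyT⟩ ?_ hTpos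
  rintro rfl
  exact ne_of_mem_erase hy (mem_singleton.1 hyT)

theorem RelAdd.add_insert_eq_mul (hra : RelAdd μ) (hμ : IsSCC μ) (hx : x ∈ S)
    (hS : (S.erase x).Nonempty) (hT : T.Nonempty) (hTS : T ⊆ S.erase x) :
    μ T S + μ (insert x T) S = μ T (S.erase x) * (1 - μ {x} S) := by
  have hsum := sum_congr rfl fun T' (hT' : T' ∈ (S.erase x).powerset.filter (·.Nonempty)) =>
    hra x S T T' hx hT (mem_filter.1 hT').2 hTS (mem_powerset.1 (mem_filter.1 hT').1)
  rw [← mul_sum, ← sum_mul, hμ.sum_add_insert_eq hx, hμ.2.1 _ hS, one_mul] at hsum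
  exact hsum.symm

end

theorem pos1_relAdd_lemma_general (μ : Finset X → Finset X → ℝ)
    (hμ : IsSCC μ)
    (hpos : Positivity1 μ) (hra : RelAdd μ) :
    ∀ (x : X) (S T : Finset X), x ∈ S → 2 ≤ S.card →
      T.Nonempty → T ⊆ S.erase x →
      (μ T (S.erase x) = 0 → μ T S + μ (insert x T) S = 0) ∧
      (0 < μ T (S.erase x) → 0 < μ T S + μ (insert x T) S) := by
  intro x S T hx hcardS hT hTS
  have hS : (S.erase x).Nonempty := by
    rw [← card_pos, card_erase_of_mem hx]
    omega
  have hx_lt : μ {x} S < 1 := hpos.apply_singleton_lt_one hμ hx hS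
  rw [hra.add_insert_eq_mul hμ hx hS hT hTS]
  exact ⟨fun h0 => by rw [h0, zero_mul], fun hp => mul_pos hp (sub_pos.2 hx_lt)⟩

theorem pos1_relAdd_lemma (μ : Finset X → Finset X → ℝ)
    (hcard : 3 ≤ Fintype.card X) (hμ : IsSCC μ)
    (hpos : Positivity1 μ) (hra : RelAdd μ) :
    ∀ (x : X) (S T : Finset X), x ∈ S → 2 ≤ S.card →
      T.Nonempty → T ⊆ S.erase x →
      (μ T (S.erase x) = 0 → μ T S + μ (insert x T) S = 0) ∧
      (0 < μ T (S.erase x) → 0 < μ T S + μ (insert x T) S) :=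
  pos1_relAdd_lemma_general μ hμ hpos hra
end

section
/- A stochastic choice correspondence μ has a Random Categorization representation if and only if it satisfies Positivity-1 and Relative Additivity. -/
open Finset

variable {X : Type*} [Fintype X] [DecidableEq X]

noncomputable def rcgVal (m : Finset X → ℝ) (T S : Finset X) : ℝ :=
  (∑ C : Finset X, if T = C ∩ S then m C else 0) /
    ∑ C ∈ Finset.univ.filter (fun C : Finset X => (C ∩ S).Nonempty), m C

def RCGRep (μ : Finset X → Finset X → ℝ) : Prop :=
  ∃ m : Finset X → ℝ,
    (∀ C, 0 ≤ m C) ∧ m ∅ = 0 ∧ (∑ C : Finset X, m C = 1) ∧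
    (∀ x : X, ∃ C : Finset X, x ∈ C ∧ 0 < m C) ∧
    ∀ T S : Finset X, T.Nonempty → T ⊆ S → μ T S = rcgVal m T S

/-!
Necessity: deleting `x` from a menu `S` merges the traces `T` and `T ∪ {x}` of the categories,
so both sides of Relative Additivity are the same product of category masses.
Sufficiency: put `m C = μ(C, X)`, which represents `μ` on the grand menu `X`. If `m` represents
`μ` on `S`, Relative Additivity makes `μ(·, S \ {x})` proportional to the mass of the traces on
`S \ {x}`, and normalization fixes the constant; downward induction on menus finishes.
-/

noncomputable def traceMass (m : Finset X → ℝ) (T S : Finset X) : ℝ :=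
  ∑ C : Finset X, if T = C ∩ S then m C else 0

noncomputable def hitMass (m : Finset X → ℝ) (S : Finset X) : ℝ :=
  ∑ C ∈ Finset.univ.filter (fun C : Finset X => (C ∩ S).Nonempty), m C

lemma rcgVal_eq_div (m : Finset X → ℝ) (T S : Finset X) :
    rcgVal m T S = traceMass m T S / hitMass m S := rfl

lemma ite_eq_erase_eq_add {α M : Type*} [DecidableEq α] [AddMonoid M] {x : α} {T : Finset α}
    (hx : x ∉ T) (U : Finset α) (a : M) :
    (if T = U.erase x then a else 0)
      = (if T = U then a else 0) + (if insert x T = U then a else 0) := by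
  by_cases hxU : x ∈ U
  · have hTU : T ≠ U := fun h => hx (h ▸ hxU)
    have key : T = U.erase x ↔ insert x T = U := by
      rw [eq_comm, erase_eq_iff_eq_insert hxU hx, eq_comm]
    rw [if_neg hTU, zero_add]
    exact if_congr key rfl rfl
  · have hTU : insert x T ≠ U := fun h => hxU (h ▸ mem_insert_self x T)
    rw [erase_eq_of_notMem hxU, if_neg hTU, add_zero]

lemma traceMass_erase (m : Finset X → ℝ) {x : X} {T : Finset X} (hx : x ∉ T) (S : Finset X) :
    traceMass m T (S.erase x) = traceMass m T S + traceMass m (insert x T) S := by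
  simp only [traceMass, inter_erase, ite_eq_erase_eq_add hx, sum_add_distrib]

lemma sum_traceMass (m : Finset X → ℝ) (S : Finset X) :
    ∑ T ∈ S.powerset.filter (fun T => T.Nonempty), traceMass m T S = hitMass m S := by
  unfold traceMass hitMass
  rw [sum_comm, sum_filter]
  refine sum_congr rfl fun C _ => ?_
  rw [sum_ite_eq' _ (C ∩ S) (fun _ => m C)]
  simp [inter_subset_right]

lemma traceMass_univ (m : Finset X → ℝ) (T : Finset X) : traceMass m T univ = m T := by
  simp [traceMass]

lemma hitMass_univ {m : Finset X → ℝ} (hm : m ∅ = 0) : hitMass m univ = ∑ C, m C := by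
  rw [hitMass, sum_filter]
  refine sum_congr rfl fun C _ => ?_
  rcases C.eq_empty_or_nonempty with rfl | hC
  · simp [hm]
  · simp [hC]

lemma le_traceMass_inter {m : Finset X → ℝ} (hm : ∀ C, 0 ≤ m C) (C S : Finset X) :
    m C ≤ traceMass m (C ∩ S) S := by
  calc m C = if C ∩ S = C ∩ S then m C else 0 := (if_pos rfl).symm
    _ ≤ traceMass m (C ∩ S) S :=
      single_le_sum (f := fun D => if C ∩ S = D ∩ S then m D else 0)
        (fun D _ => by split_ifs <;> simp [hm]) (mem_univ C)

lemma hitMass_pos {m : Finset X → ℝ} (hm : ∀ C, 0 ≤ m C)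
    (hcov : ∀ y : X, ∃ C : Finset X, y ∈ C ∧ 0 < m C) {S : Finset X} (hS : S.Nonempty) :
    0 < hitMass m S := by
  obtain ⟨y, hy⟩ := hS
  obtain ⟨C, hyC, hC⟩ := hcov y
  exact sum_pos' (fun D _ => hm D) ⟨C, by simpa using ⟨y, mem_inter.2 ⟨hyC, hy⟩⟩, hC⟩

lemma rcgVal_add_rcgVal_insert (m : Finset X → ℝ) {x : X} {T : Finset X} (hx : x ∉ T)
    (S : Finset X) :
    rcgVal m T S + rcgVal m (insert x T) S = traceMass m T (S.erase x) / hitMass m S := by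
  rw [rcgVal_eq_div, rcgVal_eq_div, ← add_div, traceMass_erase m hx]

lemma rcgVal_relAdd (m : Finset X → ℝ) {x : X} {T T' : Finset X} (hT : x ∉ T) (hT' : x ∉ T')
    (S : Finset X) :
    rcgVal m T (S.erase x) * (rcgVal m T' S + rcgVal m (insert x T') S)
      = rcgVal m T' (S.erase x) * (rcgVal m T S + rcgVal m (insert x T) S) := by
  rw [rcgVal_add_rcgVal_insert m hT, rcgVal_add_rcgVal_insert m hT', rcgVal_eq_div,
    rcgVal_eq_div]
  ring

lemma RCGRep.positivity1 {μ : Finset X → Finset X → ℝ} (h : RCGRep μ) : Positivity1 μ := by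
  obtain ⟨m, hm, -, -, hcov, hrep⟩ := h
  intro x S hxS
  obtain ⟨C, hxC, hC⟩ := hcov x
  have hx : x ∈ C ∩ S := mem_inter.2 ⟨hxC, hxS⟩
  refine ⟨C ∩ S, hx, ?_⟩
  rw [hrep _ _ ⟨x, hx⟩ inter_subset_right, rcgVal_eq_div]
  exact div_pos (hC.trans_le (le_traceMass_inter hm C S)) (hitMass_pos hm hcov ⟨x, hxS⟩)

lemma RCGRep.relAdd {μ : Finset X → Finset X → ℝ} (h : RCGRep μ) : RelAdd μ := by
  obtain ⟨m, -, -, -, -, hrep⟩ := h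
  intro x S T T' hxS hT hT' hTS hT'S
  have hxT : x ∉ T := fun h => (mem_erase.1 (hTS h)).1 rfl
  have hxT' : x ∉ T' := fun h => (mem_erase.1 (hT'S h)).1 rfl
  have hTS' := hTS.trans (erase_subset x S)
  have hT'S' := hT'S.trans (erase_subset x S)
  rw [hrep T _ hT hTS, hrep T' _ hT' hT'S, hrep T S hT hTS', hrep T' S hT' hT'S',
    hrep _ S (insert_nonempty x T) (insert_subset hxS hTS'),
    hrep _ S (insert_nonempty x T') (insert_subset hxS hT'S')]
  exact rcgVal_relAdd m hxT hxT' S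

lemma mul_sum_eq_of_cross_eq {ι : Type*} {s : Finset ι} {f g : ι → ℝ} (hf : ∑ j ∈ s, f j = 1)
    (hfg : ∀ i ∈ s, ∀ j ∈ s, f i * g j = f j * g i) {i : ι} (hi : i ∈ s) :
    f i * ∑ j ∈ s, g j = g i := calc
  f i * ∑ j ∈ s, g j = ∑ j ∈ s, f j * g i := by
    rw [mul_sum]; exact sum_congr rfl fun j hj => hfg i hi j hj
  _ = g i := by rw [← sum_mul, hf, one_mul]

def AgreesOn (μ : Finset X → Finset X → ℝ) (m : Finset X → ℝ) (S : Finset X) : Prop :=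
  ∀ T, T.Nonempty → T ⊆ S → μ T S = rcgVal m T S

/-- Relative Additivity makes `μ · (S.erase x)` proportional to `traceMass m · (S.erase x)`;
the constant is fixed since `μ · (S.erase x)` sums to one. -/
lemma AgreesOn.erase {μ : Finset X → Finset X → ℝ} {m : Finset X → ℝ} {S : Finset X} {x : X}
    (hμ : IsSCC μ) (hra : RelAdd μ) (hD : ∀ S : Finset X, S.Nonempty → 0 < hitMass m S)
    (hx : x ∈ S) (hS : AgreesOn μ m S) : AgreesOn μ m (S.erase x) := by
  set s := (S.erase x).powerset.filter (fun T => T.Nonempty)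
  have mem_s {T : Finset X} : T ∈ s ↔ T ⊆ S.erase x ∧ T.Nonempty := by simp [s]
  have hsplit : ∀ T ∈ s, μ T S + μ (insert x T) S = traceMass m T (S.erase x) / hitMass m S := by
    intro T hT
    obtain ⟨hTS, hT⟩ := mem_s.1 hT
    have hxT : x ∉ T := fun h => (mem_erase.1 (hTS h)).1 rfl
    have hTS' := hTS.trans (erase_subset x S)
    rw [hS T hT hTS', hS _ (insert_nonempty x T) (insert_subset hx hTS'),
      rcgVal_add_rcgVal_insert m hxT]
  have hcross : ∀ T ∈ s, ∀ T' ∈ s, μ T (S.erase x) * traceMass m T' (S.erase x)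
      = μ T' (S.erase x) * traceMass m T (S.erase x) := by
    intro T hT T' hT'
    have h := hra x S T T' hx (mem_s.1 hT).2 (mem_s.1 hT').2 (mem_s.1 hT).1 (mem_s.1 hT').1
    rw [hsplit T hT, hsplit T' hT', mul_div_assoc', mul_div_assoc',
      div_left_inj' (hD S ⟨x, hx⟩).ne'] at h
    exact h
  intro T hT hTS
  have hsum := mul_sum_eq_of_cross_eq (hμ.2.1 _ (hT.mono hTS)) hcross (mem_s.2 ⟨hTS, hT⟩)
  rw [sum_traceMass] at hsum
  rw [rcgVal_eq_div, eq_div_iff (hD _ (hT.mono hTS)).ne', hsum]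

lemma AgreesOn.of_compl {μ : Finset X → Finset X → ℝ} {m : Finset X → ℝ}
    (hμ : IsSCC μ) (hra : RelAdd μ) (hD : ∀ S : Finset X, S.Nonempty → 0 < hitMass m S)
    (huniv : AgreesOn μ m univ) (A : Finset X) : AgreesOn μ m Aᶜ := by
  induction A using Finset.induction_on with
  | empty => simpa using huniv
  | insert a A ha ih => rw [compl_insert]; exact ih.erase hμ hra hD (mem_compl.2 ha)

noncomputable def grandMenuMass (μ : Finset X → Finset X → ℝ) (C : Finset X) : ℝ :=
  if C.Nonempty then μ C univ else 0

omit [DecidableEq X] in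
lemma sum_grandMenuMass [Nonempty X] {μ : Finset X → Finset X → ℝ} (hμ : IsSCC μ) :
    ∑ C, grandMenuMass μ C = 1 := by
  rw [← hμ.2.1 univ univ_nonempty, powerset_univ, sum_filter]
  rfl

lemma rcgRep_of_positivity1_of_relAdd [Nonempty X] {μ : Finset X → Finset X → ℝ}
    (hμ : IsSCC μ) (hpos : Positivity1 μ) (hra : RelAdd μ) : RCGRep μ := by
  set m := grandMenuMass μ
  have hm : ∀ C, 0 ≤ m C := fun C => by
    unfold m grandMenuMass; split_ifs
    exacts [(hμ.1 C univ (subset_univ C)).1, le_rfl]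
  have hm_empty : m ∅ = 0 := by simp [m, grandMenuMass]
  have hcov : ∀ y : X, ∃ C : Finset X, y ∈ C ∧ 0 < m C := fun y => by
    obtain ⟨T, hyT, hT⟩ := hpos y univ (mem_univ y)
    exact ⟨T, hyT, by simpa [m, grandMenuMass, show T.Nonempty from ⟨y, hyT⟩] using hT⟩
  have huniv : AgreesOn μ m univ := fun T hT _ => by
    rw [rcgVal_eq_div, traceMass_univ, hitMass_univ hm_empty, sum_grandMenuMass hμ, div_one]
    simp [m, grandMenuMass, hT]
  have hall : ∀ S, AgreesOn μ m S := fun S => by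
    simpa using huniv.of_compl hμ hra (fun _ => hitMass_pos hm hcov) Sᶜ
  exact ⟨m, hm, hm_empty, sum_grandMenuMass hμ, hcov, fun T S => hall S T⟩

theorem rcg_iff_pos1_relAdd (μ : Finset X → Finset X → ℝ)
    (hcard : 3 ≤ Fintype.card X) (hμ : IsSCC μ) :
    RCGRep μ ↔ Positivity1 μ ∧ RelAdd μ := by
  have : Nonempty X := Fintype.card_pos_iff.mp (by omega)
  exact ⟨fun h => ⟨h.positivity1, h.relAdd⟩,
    fun ⟨hpos, hra⟩ => rcgRep_of_positivity1_of_relAdd hμ hpos hra⟩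
end

section
/- Relative Additivity implies monotonicity: if a stochastic choice correspondence μ satisfies Positivity-1 and Relative Additivity, then μ(T,S) ≤ μ(T, S\{x}) for all nonempty T ⊆ S\{x} with x ∈ S. -/
/-!
Summing Relative Additivity over all nonempty `T' ⊆ S \ {x}` and using that `μ(·, S \ {x})` and
`μ(·, S)` both sum to one gives
`μ(T, S \ {x}) · (1 - μ({x}, S)) = μ(T, S) + μ(T ∪ {x}, S)`,
from which monotonicity follows since all terms are nonnegative.
-/

open Finset

variable {X : Type*} [Fintype X] [DecidableEq X]

theorem Finset.sum_filter_nonempty_powerset_insert {α G : Type*} [DecidableEq α]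
    [AddCommGroup G] {x : α} {S : Finset α} (hx : x ∉ S) (f : Finset α → G) :
    ∑ T ∈ (insert x S).powerset.filter (·.Nonempty), f T
      = f {x} + ∑ T ∈ S.powerset.filter (·.Nonempty), (f T + f (insert x T)) := by
  have sum_nonempty : ∀ (U : Finset α) (g : Finset α → G),
      ∑ T ∈ U.powerset.filter (·.Nonempty), g T = ∑ T ∈ U.powerset, g T - g ∅ := by
    intro U g
    rw [← sum_erase_eq_sub (empty_mem_powerset U)]
    congr 1
    ext T
    simp [nonempty_iff_ne_empty, and_comm]
  rw [sum_nonempty, sum_nonempty, sum_powerset_insert hx, sum_add_distrib, insert_empty_eq]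
  abel

theorem RelAdd.mul_one_sub_singleton_eq {α : Type*} [DecidableEq α]
    {μ : Finset α → Finset α → ℝ} (hra : RelAdd μ)
    (htot : ∀ S : Finset α, S.Nonempty →
      ∑ T ∈ S.powerset.filter (fun T => T.Nonempty), μ T S = 1)
    {x : α} {S T : Finset α} (hx : x ∈ S) (hT : T.Nonempty) (hTS : T ⊆ S.erase x) :
    μ T (S.erase x) * (1 - μ {x} S) = μ T S + μ (insert x T) S := by
  have sum_pairs : ∑ T' ∈ (S.erase x).powerset.filter (·.Nonempty),
      (μ T' S + μ (insert x T') S) = 1 - μ {x} S := by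
    rw [← htot S ⟨x, hx⟩, ← insert_erase hx,
      sum_filter_nonempty_powerset_insert (notMem_erase x S), insert_erase hx]
    abel
  calc μ T (S.erase x) * (1 - μ {x} S)
      = ∑ T' ∈ (S.erase x).powerset.filter (·.Nonempty),
          μ T (S.erase x) * (μ T' S + μ (insert x T') S) := by rw [← mul_sum, sum_pairs]
    _ = ∑ T' ∈ (S.erase x).powerset.filter (·.Nonempty),
          μ T' (S.erase x) * (μ T S + μ (insert x T) S) := by
        refine sum_congr rfl fun T' hT' => ?_
        rw [mem_filter, mem_powerset] at hT'
        exact hra x S T T' hx hT hT'.2 hTS hT'.1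
    _ = μ T S + μ (insert x T) S := by rw [← sum_mul, htot _ (hT.mono hTS), one_mul]

theorem relAdd_implies_monotone_general (μ : Finset X → Finset X → ℝ)
    (hμ : IsSCC μ) (hra : RelAdd μ) :
    ∀ (x : X) (S T : Finset X), x ∈ S → T.Nonempty → T ⊆ S.erase x →
      μ T S ≤ μ T (S.erase x) := by
  intro x S T hx hT hTS
  obtain ⟨hbound, htot, -⟩ := hμ
  have hTS' : T ⊆ S := hTS.trans (erase_subset x S)
  have h_erase := (hbound T _ hTS).1
  have h_singleton := (hbound {x} S (singleton_subset_iff.mpr hx)).1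
  have h_insert := (hbound (insert x T) S (insert_subset hx hTS')).1
  calc μ T S ≤ μ T S + μ (insert x T) S := le_add_of_nonneg_right h_insert
    _ = μ T (S.erase x) * (1 - μ {x} S) := (hra.mul_one_sub_singleton_eq htot hx hT hTS).symm
    _ ≤ μ T (S.erase x) := mul_le_of_le_one_right h_erase (by linarith)

theorem relAdd_implies_monotone (μ : Finset X → Finset X → ℝ)
    (hμ : IsSCC μ) (hpos : Positivity1 μ) (hra : RelAdd μ) :
    ∀ (x : X) (S T : Finset X), x ∈ S → T.Nonempty → T ⊆ S.erase x →
      μ T S ≤ μ T (S.erase x) :=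
  relAdd_implies_monotone_general μ hμ hra
end

section
/- A full-support stochastic choice correspondence μ has an Independent Choice representation if and only if it satisfies Independence of Irrelevant Sets and Relative Additivity. -/
open Finset

variable {X : Type*} [Fintype X] [DecidableEq X]

def ICRep (μ : Finset X → Finset X → ℝ) : Prop :=
  ∃ γ : X → ℝ,
    (∀ x, 0 < γ x ∧ γ x < 1) ∧
    ∀ T S : Finset X, T.Nonempty → T ⊆ S →
      μ T S = ((∏ x ∈ T, γ x) * ∏ y ∈ S \ T, (1 - γ y))
        / (1 - ∏ z ∈ S, (1 - γ z))

/-!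
Under an IC representation, with odds `γ x / (1 - γ x)`, the probability `μ T S` is the product
of the odds over `T` times a factor depending only on the menu `S`; both axioms follow at once.

Conversely, IIS together with the normalisation `∑_{∅ ≠ T ⊆ S} μ T S = 1` gives
`μ T S = v T / ∑_{∅ ≠ T' ⊆ S} v T'` with `v = μ (·) univ`. Relative Additivity at the grand menu
then says that `v (insert x T) / v T` does not depend on `T`; calling it `r x`, `v` is a constant
times `∏_{x ∈ T} r x`, its sum over the nonempty subsets of `S` is that constant times
`∏_{x ∈ S} (1 + r x) - 1`, and this is the IC formula for `γ = r / (1 + r)`.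
-/

section

variable {α : Type*} [DecidableEq α]

noncomputable def icProb (γ : α → ℝ) (T S : Finset α) : ℝ :=
  ((∏ x ∈ T, γ x) * ∏ y ∈ S \ T, (1 - γ y)) / (1 - ∏ z ∈ S, (1 - γ z))

lemma prod_one_sub_lt_one {γ : α → ℝ} (hγ : ∀ x, 0 < γ x ∧ γ x < 1) {S : Finset α}
    (hS : S.Nonempty) : ∏ z ∈ S, (1 - γ z) < 1 := by
  obtain ⟨a, ha⟩ := hS
  have herase : ∏ z ∈ S.erase a, (1 - γ z) ≤ 1 :=
    prod_le_one (fun z _ => by linarith [(hγ z).2]) (fun z _ => by linarith [(hγ z).1])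
  rw [← mul_prod_erase S _ ha]
  nlinarith [hγ a, mul_le_mul_of_nonneg_left herase (sub_nonneg.mpr (hγ a).2.le)]

lemma icProb_eq_prod_odds_mul {γ : α → ℝ} (hγ : ∀ x, γ x ≠ 1) {T S : Finset α} (hTS : T ⊆ S) :
    icProb γ T S = (∏ x ∈ T, γ x / (1 - γ x)) *
      ((∏ z ∈ S, (1 - γ z)) / (1 - ∏ z ∈ S, (1 - γ z))) := by
  have hT : ∏ y ∈ T, (1 - γ y) ≠ 0 := prod_ne_zero_iff.mpr fun x _ => sub_ne_zero.mpr (hγ x).symm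
  rw [icProb, ← prod_sdiff hTS, prod_div_distrib]
  field_simp

lemma div_one_add_pos_and_lt_one {r : ℝ} (hr : 0 < r) : 0 < r / (1 + r) ∧ r / (1 + r) < 1 :=
  ⟨div_pos hr (by linarith), (div_lt_one (by linarith)).mpr (by linarith)⟩

lemma icProb_div_one_add {r : α → ℝ} (hr : ∀ x, 0 < r x) {T S : Finset α} (hTS : T ⊆ S) :
    icProb (fun x => r x / (1 + r x)) T S = (∏ x ∈ T, r x) / (∏ x ∈ S, (1 + r x) - 1) := by
  have h1r : ∀ x, 1 + r x ≠ 0 := fun x => by linarith [hr x]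
  have hone_sub : ∀ x, 1 - r x / (1 + r x) = (1 + r x)⁻¹ := fun x => by
    rw [one_sub_div (h1r x), add_sub_cancel_right, one_div]
  have hP : ∏ x ∈ S, (1 + r x) ≠ 0 := prod_ne_zero_iff.mpr fun x _ => h1r x
  have hodds : ∀ x, r x / (1 + r x) / (1 + r x)⁻¹ = r x := fun x => by
    rw [div_inv_eq_mul, div_mul_cancel₀ _ (h1r x)]
  have hK : ∀ P : ℝ, P ≠ 0 → P⁻¹ / (1 - P⁻¹) = (P - 1)⁻¹ := fun P hP => by
    rw [show 1 - P⁻¹ = P⁻¹ * (P - 1) by field_simp, div_mul_cancel_left₀ (inv_ne_zero hP)]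
  rw [icProb_eq_prod_odds_mul (fun x => (div_one_add_pos_and_lt_one (hr x)).2.ne) hTS]
  simp only [hone_sub, hodds, prod_inv_distrib]
  rw [hK _ hP, div_eq_mul_inv]

lemma iis_of_eq_mul {μ : Finset α → Finset α → ℝ} {w K : Finset α → ℝ}
    (hμ : ∀ T S, T.Nonempty → T ⊆ S → μ T S = w T * K S)
    (hK : ∀ S : Finset α, S.Nonempty → K S ≠ 0) : IIS μ := by
  intro T T' S S' hT hT' hTSS' hT'SS' _ _ _ _
  have hTS := hTSS'.trans inter_subset_left
  have hTS' := hTSS'.trans inter_subset_right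
  rw [hμ T S hT hTS, hμ T' S hT' (hT'SS'.trans inter_subset_left), hμ T S' hT hTS',
    hμ T' S' hT' (hT'SS'.trans inter_subset_right), mul_div_mul_right _ _ (hK S (hT.mono hTS)),
    mul_div_mul_right _ _ (hK S' (hT.mono hTS'))]

lemma relAdd_of_eq_prod_mul {μ : Finset α → Finset α → ℝ} {o : α → ℝ} {K : Finset α → ℝ}
    (hμ : ∀ T S, T.Nonempty → T ⊆ S → μ T S = (∏ x ∈ T, o x) * K S) : RelAdd μ := by
  intro x S T T' hx hT hT' hTS hT'S
  have hinsert : ∀ U, U.Nonempty → U ⊆ S.erase x →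
      μ U S + μ (insert x U) S = (∏ y ∈ U, o y) * (1 + o x) * K S := fun U hU hUS => by
    have hUS' := (subset_erase.mp hUS).1
    rw [hμ U S hU hUS', hμ _ S (insert_nonempty x U) (insert_subset hx hUS'),
      prod_insert (subset_erase.mp hUS).2]
    ring
  rw [hinsert T hT hTS, hinsert T' hT' hT'S, hμ T _ hT hTS, hμ T' _ hT' hT'S]
  ring

end

lemma sum_filter_nonempty_powerset_prod {α R : Type*} [CommRing R] (f : α → R) (S : Finset α) :
    ∑ T ∈ S.powerset.filter (fun T => T.Nonempty), ∏ x ∈ T, f x = ∏ x ∈ S, (1 + f x) - 1 := by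
  classical
  have hfilter : S.powerset.filter (fun T => T.Nonempty) = S.powerset.erase ∅ := by
    ext T; simp [nonempty_iff_ne_empty, and_comm]
  rw [hfilter, sum_erase_eq_sub (empty_mem_powerset S), prod_one_add, prod_empty]

lemma sum_filter_nonempty_powerset_univ_pos {α : Type*} [Fintype α]
    {μ : Finset α → Finset α → ℝ} (hfs : FullSupport μ) {S : Finset α} (hS : S.Nonempty) :
    0 < ∑ T ∈ S.powerset.filter (fun T => T.Nonempty), μ T univ :=
  sum_pos (fun T hT => hfs T univ (mem_filter.mp hT).2 (subset_univ T))
    ⟨S, mem_filter.mpr ⟨mem_powerset_self S, hS⟩⟩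

lemma eq_div_sum_univ_of_iis {μ : Finset X → Finset X → ℝ}
    (hsum : ∀ S : Finset X, S.Nonempty →
      ∑ T ∈ S.powerset.filter (fun T => T.Nonempty), μ T S = 1)
    (hfs : FullSupport μ) (hiis : IIS μ) {T S : Finset X} (hT : T.Nonempty) (hTS : T ⊆ S) :
    μ T S = μ T univ / ∑ T' ∈ S.powerset.filter (fun T => T.Nonempty), μ T' univ := by
  have hS : S.Nonempty := hT.mono hTS
  have hcross : ∀ T' ∈ S.powerset.filter (fun T => T.Nonempty),
      μ T' S * μ T univ = μ T S * μ T' univ := fun T' hT'mem => by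
    obtain ⟨hT'S, hT'⟩ := mem_filter.mp hT'mem
    replace hT'S := mem_powerset.mp hT'S
    have h := hiis T T' S univ hT hT' (by simpa using hTS) (by simpa using hT'S)
      (hfs T S hT hTS) (hfs T' S hT' hT'S) (hfs T univ hT (subset_univ T))
      (hfs T' univ hT' (subset_univ T'))
    rw [div_eq_div_iff (hfs T' S hT' hT'S).ne' (hfs T' univ hT' (subset_univ T')).ne'] at h
    linear_combination -h
  rw [eq_div_iff (sum_filter_nonempty_powerset_univ_pos hfs hS).ne', mul_sum,
    ← sum_congr rfl hcross, ← sum_mul, hsum S hS, one_mul]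

lemma cross_mul_univ_of_relAdd {μ : Finset X → Finset X → ℝ} {N : Finset X → ℝ}
    (hμ : ∀ T S, T.Nonempty → T ⊆ S → μ T S = μ T univ / N S)
    (hN : ∀ S : Finset X, S.Nonempty → N S ≠ 0) (hra : RelAdd μ) {x : X} {T T' : Finset X}
    (hT : T.Nonempty) (hT' : T'.Nonempty) (hxT : x ∉ T) (hxT' : x ∉ T') :
    μ T univ * μ (insert x T') univ = μ T' univ * μ (insert x T) univ := by
  have hTx : T ⊆ univ.erase x := subset_erase.mpr ⟨subset_univ T, hxT⟩
  have hT'x : T' ⊆ univ.erase x := subset_erase.mpr ⟨subset_univ T', hxT'⟩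
  have h := hra x univ T T' (mem_univ x) hT hT' hTx hT'x
  rw [hμ T _ hT hTx, hμ T' _ hT' hT'x, div_mul_eq_mul_div, div_mul_eq_mul_div,
    div_left_inj' (hN _ (hT.mono hTx))] at h
  linear_combination h

lemma mul_prod_compl_eq_univ {v : Finset X → ℝ} {r : X → ℝ}
    (hstep : ∀ x T, T.Nonempty → x ∉ T → v (insert x T) = r x * v T)
    {T : Finset X} (hT : T.Nonempty) : v T * ∏ x ∈ Tᶜ, r x = v univ := by
  suffices h : ∀ U : Finset X, Uᶜ.Nonempty → v Uᶜ * ∏ x ∈ U, r x = v univ by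
    simpa using h Tᶜ (by simpa using hT)
  intro U
  induction U using Finset.induction_on with
  | empty => simp
  | insert x U hxU ih =>
    intro hne
    rw [compl_insert] at hne ⊢
    have hstep' := hstep x _ hne (notMem_erase x Uᶜ)
    rw [insert_erase (mem_compl.mpr hxU)] at hstep'
    rw [prod_insert hxU, ← ih (hne.mono (erase_subset x Uᶜ)), hstep']
    ring

lemma exists_eq_mul_prod_of_cross_mul [Nontrivial X] {v : Finset X → ℝ}
    (hv : ∀ T : Finset X, T.Nonempty → 0 < v T)
    (hcross : ∀ x T T', T.Nonempty → T'.Nonempty → x ∉ T → x ∉ T' →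
      v T * v (insert x T') = v T' * v (insert x T)) :
    ∃ r : X → ℝ, (∀ x, 0 < r x) ∧ ∃ c : ℝ, 0 < c ∧ ∀ T, T.Nonempty → v T = c * ∏ x ∈ T, r x := by
  have herase : ∀ x : X, (univ.erase x).Nonempty := fun x =>
    let ⟨y, hy⟩ := exists_ne x
    ⟨y, mem_erase.mpr ⟨hy, mem_univ y⟩⟩
  set r : X → ℝ := fun x => v univ / v (univ.erase x)
  have hr : ∀ x, 0 < r x := fun x => div_pos (hv univ univ_nonempty) (hv _ (herase x))
  have hstep : ∀ x T, T.Nonempty → x ∉ T → v (insert x T) = r x * v T := fun x T hT hxT => by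
    have h := hcross x T _ hT (herase x) hxT (notMem_erase x univ)
    rw [insert_erase (mem_univ x)] at h
    rw [div_mul_eq_mul_div, eq_div_iff (hv _ (herase x)).ne']
    linear_combination -h
  have hprod : ∀ T : Finset X, 0 < ∏ x ∈ T, r x := fun T => prod_pos fun x _ => hr x
  refine ⟨r, hr, v univ / ∏ x, r x, div_pos (hv univ univ_nonempty) (hprod univ),
    fun T hT => ?_⟩
  rw [← mul_prod_compl_eq_univ hstep hT, ← prod_mul_prod_compl T r]
  field_simp [(hprod T).ne', (hprod Tᶜ).ne']

theorem ic_iff_IIS_relAdd (μ : Finset X → Finset X → ℝ)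
    (hcard : 3 ≤ Fintype.card X) (hμ : IsSCC μ) (hfs : FullSupport μ) :
    ICRep μ ↔ IIS μ ∧ RelAdd μ := by
  constructor
  · rintro ⟨γ, hγ, hrep⟩
    have hodds : ∀ T S, T.Nonempty → T ⊆ S → μ T S = (∏ x ∈ T, γ x / (1 - γ x)) *
        ((∏ z ∈ S, (1 - γ z)) / (1 - ∏ z ∈ S, (1 - γ z))) := fun T S hT hTS =>
      (hrep T S hT hTS).trans (icProb_eq_prod_odds_mul (fun x => (hγ x).2.ne) hTS)
    have hK : ∀ S : Finset X, S.Nonempty →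
        (∏ z ∈ S, (1 - γ z)) / (1 - ∏ z ∈ S, (1 - γ z)) ≠ 0 := fun S hS =>
      div_ne_zero (prod_ne_zero_iff.mpr fun x _ => sub_ne_zero.mpr (hγ x).2.ne')
        (sub_pos.mpr (prod_one_sub_lt_one hγ hS)).ne'
    exact ⟨iis_of_eq_mul hodds hK, relAdd_of_eq_prod_mul hodds⟩
  · rintro ⟨hiis, hra⟩
    have : Nontrivial X := Fintype.one_lt_card_iff_nontrivial.mp (by omega)
    have hdiv := fun T S => eq_div_sum_univ_of_iis hμ.2.1 hfs hiis (T := T) (S := S)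
    obtain ⟨r, hr, c, hc, hv⟩ := exists_eq_mul_prod_of_cross_mul
      (fun T hT => hfs T univ hT (subset_univ T))
      (fun x T T' hT hT' hxT hxT' => cross_mul_univ_of_relAdd hdiv
        (fun S hS => (sum_filter_nonempty_powerset_univ_pos hfs hS).ne') hra hT hT' hxT hxT')
    refine ⟨fun x => r x / (1 + r x), fun x => div_one_add_pos_and_lt_one (hr x),
      fun T S hT hTS => ?_⟩
    rw [← icProb, icProb_div_one_add hr hTS, hdiv T S hT hTS, hv T hT,
      sum_congr rfl fun T' hT' => hv T' (mem_filter.mp hT').2, ← mul_sum,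
      sum_filter_nonempty_powerset_prod, mul_div_mul_left _ _ hc.ne']
end

section
/- If μ has a Random Reference Model representation, then μ satisfies Relative Additivity-1: for all x ∈ S and nonempty T,T' ⊆ S\{x} with T,T' ≠ Q^R(x)∩(S\{x}), it holds that μ(T,S\{x})·[μ(T',S)+μ(T'∪{x},S)] = μ(T',S\{x})·[μ(T,S)+μ(T∪{x},S)], where Q^R(x) = {x} ∪ {y ≠ x : μ({x},{x,y}) = 0}. -/
/-!
Removing `x` from the menu `S` merges the events `T` and `T ∪ {x}`: a reference point `z ≠ x`
whose constraint set cuts `S \ {x}` down to `T` cuts `S` down to exactly one of them. As long as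
`T` is not what `x`'s own constraint set leaves of `S \ {x}`, the point `x` contributes to neither,
so `μ(T,S) + μ(T ∪ {x},S)` is `μ(T, S \ {x})` rescaled by the salience ratio
`s(S \ {x}) / s(S)`, which does not depend on `T`. The identity follows by cross-multiplying,
once `Q^R = Q` is read off the binary menus.
-/

open Finset

variable {X : Type*} [Fintype X] [DecidableEq X]

def IsRRM (μ : Finset X → Finset X → ℝ) (s : X → ℝ) (Q : X → Finset X) : Prop :=
  (∀ x, 0 < s x) ∧ (∀ x, x ∈ Q x) ∧ Function.Injective Q ∧
  ∀ T S : Finset X, T.Nonempty → T ⊆ S →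
    μ T S = ∑ x ∈ S, (s x / ∑ y ∈ S, s y) * (if T = Q x ∩ S then 1 else 0)

def RRMRep (μ : Finset X → Finset X → ℝ) : Prop := ∃ s Q, IsRRM μ s Q

open scoped Classical in
/-- The revealed constraint function: `QR μ x = {x} ∪ {y ≠ x : μ({x},{x,y}) = 0}`. -/
noncomputable def QR (μ : Finset X → Finset X → ℝ) (x : X) : Finset X :=
  insert x (Finset.univ.filter (fun y => y ≠ x ∧ μ {x} {x, y} = 0))

theorem Finset.ite_eq_add_ite_insert_eq {α : Type*} [DecidableEq α] {U B : Finset α} {x : α}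
    (hx : x ∉ U) :
    ((if U = B then 1 else 0) + if insert x U = B then 1 else 0 : ℝ) =
      if U = B.erase x then 1 else 0 := by
  by_cases hxB : x ∈ B
  · have hUB : U ≠ B := fun h => hx (h ▸ hxB)
    have hiff : insert x U = B ↔ U = B.erase x :=
      ⟨fun h => by rw [← h, erase_insert hx], fun h => by rw [h, insert_erase hxB]⟩
    simp only [if_neg hUB, hiff, zero_add]
  · have hins : insert x U ≠ B := fun h => hxB (h ▸ mem_insert_self x U)
    simp only [if_neg hins, erase_eq_of_notMem hxB, add_zero]

namespace IsRRM

variable {μ : Finset X → Finset X → ℝ} {s : X → ℝ} {Q : X → Finset X}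

omit [Fintype X] in
theorem sum_salience_pos (h : IsRRM μ s Q) {S : Finset X} (hS : S.Nonempty) :
    0 < ∑ y ∈ S, s y :=
  sum_pos (fun y _ => h.1 y) hS

omit [Fintype X] in
theorem mu_singleton_pair_eq_zero_iff (h : IsRRM μ s Q) {x y : X} (hyx : y ≠ x) :
    μ {x} {x, y} = 0 ↔ y ∈ Q x := by
  have hpos : 0 < s x / ∑ z ∈ ({x, y} : Finset X), s z :=
    div_pos (h.1 x) (h.sum_salience_pos (insert_nonempty x {y}))
  obtain ⟨-, hQ, -, hμ⟩ := h
  -- `y` sees `{x, y}` through `Q y ∋ y`, so only the reference point `x` can produce `{x}`.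
  have hy_ne : ({x} : Finset X) ≠ Q y ∩ {x, y} := by
    simp only [ne_eq, Finset.ext_iff, mem_singleton, mem_inter, mem_insert]
    grind [hQ y]
  have hx_iff : ({x} : Finset X) = Q x ∩ {x, y} ↔ y ∉ Q x := by
    simp only [Finset.ext_iff, mem_singleton, mem_inter, mem_insert]
    grind [hQ x]
  rw [hμ {x} {x, y} (singleton_nonempty x) (by simp), sum_pair hyx.symm, if_neg hy_ne]
  by_cases hy : y ∈ Q x
  · simp [hy, hx_iff]
  · simp [hy, hx_iff, hpos.ne']

theorem QR_eq (h : IsRRM μ s Q) (x : X) : QR μ x = Q x := by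
  ext y
  by_cases hyx : y = x
  · subst hyx; simp [QR, h.2.1 y]
  · simp [QR, hyx, h.mu_singleton_pair_eq_zero_iff hyx]

omit [Fintype X] in
theorem mu_add_mu_insert (h : IsRRM μ s Q) {x : X} {S U : Finset X} (hxS : x ∈ S)
    (hU : U.Nonempty) (hUS : U ⊆ S.erase x) (hUQ : U ≠ Q x ∩ S.erase x) :
    μ U S + μ (insert x U) S =
      (∑ y ∈ S.erase x, s y) / (∑ y ∈ S, s y) * μ U (S.erase x) := by
  have hμ := h.2.2.2
  have hxU : x ∉ U := fun hx => (mem_erase.mp (hUS hx)).1 rfl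
  have hUS' : U ⊆ S := hUS.trans (erase_subset x S)
  have hW' : (∑ y ∈ S.erase x, s y) ≠ 0 := (h.sum_salience_pos (hU.mono hUS)).ne'
  rw [hμ U S hU hUS', hμ (insert x U) S (insert_nonempty x U) (insert_subset hxS hUS'),
    hμ U (S.erase x) hU hUS, ← sum_add_distrib]
  simp only [← mul_add, ite_eq_add_ite_insert_eq hxU, ← inter_erase]
  rw [← add_sum_erase S _ hxS, if_neg hUQ, mul_zero, zero_add, mul_sum]
  refine sum_congr rfl fun z _ => ?_
  field_simp

end IsRRM

theorem rrm_relAdd1 (μ : Finset X → Finset X → ℝ) (h : RRMRep μ) :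
    ∀ (x : X) (S T T' : Finset X), x ∈ S →
      T.Nonempty → T'.Nonempty → T ⊆ S.erase x → T' ⊆ S.erase x →
      T ≠ QR μ x ∩ S.erase x → T' ≠ QR μ x ∩ S.erase x →
      μ T (S.erase x) * (μ T' S + μ (insert x T') S)
        = μ T' (S.erase x) * (μ T S + μ (insert x T) S) := by
  obtain ⟨s, Q, hrrm⟩ := h
  intro x S T T' hxS hT hT' hTS hT'S hTQ hT'Q
  rw [hrrm.QR_eq] at hTQ hT'Q
  rw [hrrm.mu_add_mu_insert hxS hT hTS hTQ, hrrm.mu_add_mu_insert hxS hT' hT'S hT'Q]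
  ring
end

section
/- If μ has an RRM representation and also an NSC representation, then μ has a singleton representation: μ({x},S) > 0 for all x ∈ S, μ(T,S) = 0 whenever |T| ≥ 2, and μ({x},S)/μ({y},S) = μ({x},S')/μ({y},S') for all S,S' ⊇ {x,y}. Conversely, any μ with a singleton representation has both an RRM and an NSC representation. -/
/-!
Both models choose a nonempty `T ⊆ S` with positive probability exactly when `T` is a
constraint set `Q x ∩ S` (RRM) or a nest `N i ∩ S` (NSC). On the menus `{a, d}` this says that
`Q a` is the nest containing `a`; as distinct alternatives have distinct constraint sets, every
nest, hence every `Q a`, is a singleton. An RRM with `Q x = {x}` is Luce's rule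
`μ({x}, S) = s x / ∑_{y ∈ S} s y`, which is a singleton representation. Conversely, a singleton
representation is Luce's rule with weights `μ({x}, X)`, and Luce's rule is both an RRM with
`Q x = {x}` and an NSC with singleton nests and `σ T = ∑_{x ∈ T} s x`.
-/

open Finset

variable {X : Type*} [Fintype X] [DecidableEq X]

def IsNSC (μ : Finset X → Finset X → ℝ) (q : ℕ) (N : Fin q → Finset X)
    (σ : Finset X → ℝ) : Prop :=
  (∀ i, (N i).Nonempty) ∧ (∀ i j, i ≠ j → Disjoint (N i) (N j)) ∧
  ((Finset.univ : Finset (Fin q)).biUnion N = (Finset.univ : Finset X)) ∧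
  σ ∅ = 0 ∧ (∀ T : Finset X, T.Nonempty → 0 < σ T) ∧
  ∀ T S : Finset X, T.Nonempty → T ⊆ S →
    μ T S = ∑ i, (σ (N i ∩ S) / ∑ j, σ (N j ∩ S)) * (if T = N i ∩ S then 1 else 0)

def NSCRep (μ : Finset X → Finset X → ℝ) : Prop := ∃ q N σ, IsNSC μ q N σ

def SingletonRep (μ : Finset X → Finset X → ℝ) : Prop :=
  (∀ (x : X) (S : Finset X), x ∈ S → 0 < μ {x} S) ∧
  (∀ T S : Finset X, 2 ≤ T.card → μ T S = 0) ∧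
  (∀ (x y : X) (S S' : Finset X), x ∈ S → y ∈ S → x ∈ S' → y ∈ S' →
    μ {x} S / μ {y} S = μ {x} S' / μ {y} S')

section Representations

variable {μ : Finset X → Finset X → ℝ}

lemma mul_ite_one_zero_pos_iff {c : ℝ} {P : Prop} [Decidable P] :
    0 < c * (if P then 1 else 0) ↔ P ∧ 0 < c := by
  split_ifs <;> simp [*]

theorem IsRRM.apply_pos_iff {s : X → ℝ} {Q : X → Finset X} (h : IsRRM μ s Q)
    {T S : Finset X} (hT : T.Nonempty) (hTS : T ⊆ S) :
    0 < μ T S ↔ ∃ x ∈ S, T = Q x ∩ S := by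
  obtain ⟨x, hx⟩ := hT
  have hD : 0 < ∑ y ∈ S, s y := sum_pos (fun y _ => h.1 y) ⟨x, hTS hx⟩
  rw [h.2.2.2 T S ⟨x, hx⟩ hTS, sum_pos_iff_of_nonneg]
  · simp only [mul_ite_one_zero_pos_iff, div_pos (h.1 _) hD, and_true]
  · intro y _
    exact mul_nonneg (div_nonneg (h.1 y).le hD.le) (by split_ifs <;> norm_num)

theorem IsNSC.exists_mem {q : ℕ} {N : Fin q → Finset X} {σ : Finset X → ℝ}
    (h : IsNSC μ q N σ) (x : X) : ∃ i, x ∈ N i := by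
  have hx : x ∈ univ.biUnion N := h.2.2.1 ▸ mem_univ x
  simpa using hx

theorem IsNSC.eq_of_mem {q : ℕ} {N : Fin q → Finset X} {σ : Finset X → ℝ}
    (h : IsNSC μ q N σ) {x : X} {i j : Fin q} (hi : x ∈ N i) (hj : x ∈ N j) : i = j := by
  by_contra hij
  exact disjoint_left.mp (h.2.1 i j hij) hi hj

theorem IsNSC.sigma_nonneg {q : ℕ} {N : Fin q → Finset X} {σ : Finset X → ℝ}
    (h : IsNSC μ q N σ) (T : Finset X) : 0 ≤ σ T := by
  rcases T.eq_empty_or_nonempty with rfl | hT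
  · exact h.2.2.2.1.ge
  · exact (h.2.2.2.2.1 T hT).le

theorem IsNSC.apply_pos_iff {q : ℕ} {N : Fin q → Finset X} {σ : Finset X → ℝ}
    (h : IsNSC μ q N σ) {T S : Finset X} (hT : T.Nonempty) (hTS : T ⊆ S) :
    0 < μ T S ↔ ∃ i, T = N i ∩ S := by
  obtain ⟨x, hx⟩ := hT
  obtain ⟨k, hk⟩ := h.exists_mem x
  have hD : 0 < ∑ j, σ (N j ∩ S) :=
    sum_pos' (fun j _ => h.sigma_nonneg _)
      ⟨k, mem_univ k, h.2.2.2.2.1 _ ⟨x, mem_inter.2 ⟨hk, hTS hx⟩⟩⟩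
  rw [h.2.2.2.2.2 T S ⟨x, hx⟩ hTS, sum_pos_iff_of_nonneg]
  · simp only [mul_ite_one_zero_pos_iff, mem_univ, true_and]
    refine exists_congr fun i => and_iff_left_of_imp fun hTi => ?_
    exact div_pos (h.2.2.2.2.1 _ (hTi ▸ ⟨x, hx⟩)) hD
  · intro i _
    exact mul_nonneg (div_nonneg (h.sigma_nonneg _) hD.le) (by split_ifs <;> norm_num)

theorem IsRRM.apply_pair_pos_iff {s : X → ℝ} {Q : X → Finset X} (h : IsRRM μ s Q)
    {a d : X} (had : a ≠ d) : 0 < μ {a} {a, d} ↔ d ∉ Q a := by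
  rw [h.apply_pos_iff (singleton_nonempty a) (by simp)]
  constructor
  · rintro ⟨x, hx, hax⟩ hdQ
    have hdx : d ∈ Q x ∩ {a, d} := by
      rcases mem_insert.1 hx with rfl | hx
      · simp [hdQ]
      · rw [mem_singleton.1 hx]
        simp [h.2.1 d]
    rw [← hax, mem_singleton] at hdx
    exact had hdx.symm
  · intro hdQ
    refine ⟨a, by simp, ?_⟩
    ext z
    simp only [mem_singleton, mem_inter, mem_insert]
    constructor
    · rintro rfl; exact ⟨h.2.1 z, Or.inl rfl⟩
    · rintro ⟨hz, rfl | rfl⟩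
      · rfl
      · exact absurd hz hdQ

theorem IsNSC.apply_pair_pos_iff {q : ℕ} {N : Fin q → Finset X} {σ : Finset X → ℝ}
    (h : IsNSC μ q N σ) {a d : X} {i : Fin q} (ha : a ∈ N i) (had : a ≠ d) :
    0 < μ {a} {a, d} ↔ d ∉ N i := by
  rw [h.apply_pos_iff (singleton_nonempty a) (by simp)]
  constructor
  · rintro ⟨j, haj⟩ hdN
    have hji : j = i := h.eq_of_mem (mem_inter.1 (haj ▸ mem_singleton_self a)).1 ha
    have hdj : d ∈ N j ∩ {a, d} := by simp [hji, hdN]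
    rw [← haj, mem_singleton] at hdj
    exact had hdj.symm
  · intro hdN
    refine ⟨i, ?_⟩
    ext z
    simp only [mem_singleton, mem_inter, mem_insert]
    constructor
    · rintro rfl; exact ⟨ha, Or.inl rfl⟩
    · rintro ⟨hz, rfl | rfl⟩
      · rfl
      · exact absurd hz hdN

theorem IsRRM.eq_nest_of_isNSC {s : X → ℝ} {Q : X → Finset X} (hR : IsRRM μ s Q)
    {q : ℕ} {N : Fin q → Finset X} {σ : Finset X → ℝ} (hN : IsNSC μ q N σ)
    {a : X} {i : Fin q} (ha : a ∈ N i) : Q a = N i := by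
  ext d
  by_cases had : a = d
  · subst had
    exact iff_of_true (hR.2.1 a) ha
  · exact not_iff_not.mp ((hR.apply_pair_pos_iff had).symm.trans (hN.apply_pair_pos_iff ha had))

theorem IsRRM.eq_singleton_of_isNSC {s : X → ℝ} {Q : X → Finset X} (hR : IsRRM μ s Q)
    {q : ℕ} {N : Fin q → Finset X} {σ : Finset X → ℝ} (hN : IsNSC μ q N σ) :
    Q = fun x => {x} := by
  funext a
  obtain ⟨i, ha⟩ := hN.exists_mem a
  ext y
  rw [mem_singleton]
  constructor
  · intro hy
    rw [hR.eq_nest_of_isNSC hN ha] at hy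
    exact hR.2.2.1 ((hR.eq_nest_of_isNSC hN hy).trans (hR.eq_nest_of_isNSC hN ha).symm)
  · rintro rfl
    exact hR.2.1 y

end Representations

section Luce

variable {μ : Finset X → Finset X → ℝ} {w : X → ℝ}

theorem sum_mul_ite_singleton_eq (f : X → ℝ) {z : X} {S : Finset X} (hz : z ∈ S) :
    ∑ x ∈ S, f x * (if {z} = {x} ∩ S then 1 else 0) = f z := by
  rw [sum_eq_single_of_mem z hz]
  · simp [hz]
  · intro y hy hyz
    simp [singleton_inter_of_mem hy, Ne.symm hyz]

theorem sum_mul_ite_singleton_eq_zero (f : X → ℝ) {T : Finset X} (hT : T.Nontrivial)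
    (S : Finset X) : ∑ x ∈ S, f x * (if T = {x} ∩ S then 1 else 0) = 0 :=
  sum_eq_zero fun _ _ => by
    rw [if_neg fun hTx => hT.not_subset_singleton (hTx ▸ inter_subset_left), mul_zero]

theorem IsRRM.apply_singleton (h : IsRRM μ w fun x => {x}) {x : X} {S : Finset X}
    (hx : x ∈ S) : μ {x} S = w x / ∑ y ∈ S, w y := by
  rw [h.2.2.2 {x} S (singleton_nonempty x) (singleton_subset_iff.2 hx),
    sum_mul_ite_singleton_eq _ hx]

theorem IsRRM.apply_eq_zero_of_nontrivial (h : IsRRM μ w fun x => {x}) {T S : Finset X}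
    (hT : T.Nontrivial) (hTS : T ⊆ S) : μ T S = 0 := by
  rw [h.2.2.2 T S hT.nonempty hTS, sum_mul_ite_singleton_eq_zero _ hT]

theorem IsRRM.singletonRep (h : IsRRM μ w fun x => {x})
    (hout : ∀ T S : Finset X, ¬ T ⊆ S → μ T S = 0) : SingletonRep μ := by
  have hD {S : Finset X} {x : X} (hx : x ∈ S) : 0 < ∑ y ∈ S, w y :=
    sum_pos (fun y _ => h.1 y) ⟨x, hx⟩
  refine ⟨fun x S hx => ?_, fun T S hT => ?_, fun x y S S' hxS hyS hxS' hyS' => ?_⟩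
  · rw [h.apply_singleton hx]
    exact div_pos (h.1 x) (hD hx)
  · by_cases hTS : T ⊆ S
    · exact h.apply_eq_zero_of_nontrivial (one_lt_card_iff_nontrivial.1 hT) hTS
    · exact hout T S hTS
  · rw [h.apply_singleton hxS, h.apply_singleton hyS, h.apply_singleton hxS',
      h.apply_singleton hyS', div_div_div_cancel_right₀ (hD hxS).ne',
      div_div_div_cancel_right₀ (hD hxS').ne']

theorem isRRM_singleton_of_luce (hw : ∀ x, 0 < w x)
    (hsingle : ∀ x S, x ∈ S → μ {x} S = w x / ∑ y ∈ S, w y)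
    (hmulti : ∀ T S : Finset X, 2 ≤ T.card → μ T S = 0) :
    IsRRM μ w fun x => {x} := by
  refine ⟨hw, mem_singleton_self, singleton_injective, fun T S hT hTS => ?_⟩
  rcases hT.exists_eq_singleton_or_nontrivial with ⟨z, rfl⟩ | hT
  · have hz : z ∈ S := singleton_subset_iff.1 hTS
    rw [hsingle z S hz, sum_mul_ite_singleton_eq _ hz]
  · rw [hmulti T S (one_lt_card_iff_nontrivial.2 hT), sum_mul_ite_singleton_eq_zero _ hT]

theorem IsRRM.isNSC_singleton (h : IsRRM μ w fun x => {x}) :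
    IsNSC μ (Fintype.card X) (fun i => {(Fintype.equivFin X).symm i})
      (fun T => ∑ x ∈ T, w x) := by
  set e := (Fintype.equivFin X).symm
  refine ⟨fun i => singleton_nonempty _, fun i j hij => ?_, ?_, sum_empty,
    fun T hT => sum_pos (fun x _ => h.1 x) hT, fun T S hT hTS => ?_⟩
  · exact disjoint_singleton.2 fun he => hij (e.injective he)
  · ext x
    simpa using ⟨e.symm x, by simp⟩
  · rw [h.2.2.2 T S hT hTS]
    have hσ (x : X) : ∑ y ∈ {x} ∩ S, w y = if x ∈ S then w x else 0 := by
      rw [singleton_inter]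
      split_ifs <;> simp
    have hW : ∑ j, (if e j ∈ S then w (e j) else 0) = ∑ y ∈ S, w y := by
      rw [e.sum_comp fun x => if x ∈ S then w x else 0, sum_ite_mem, univ_inter]
    simp only [hσ, hW]
    rw [e.sum_comp fun x =>
        ((if x ∈ S then w x else 0) / ∑ y ∈ S, w y) * if T = {x} ∩ S then 1 else 0,
      ← sum_subset (subset_univ S) fun x _ hx => by simp [hx]]
    exact sum_congr rfl fun x hx => by rw [if_pos hx]

theorem sum_apply_singleton_eq_one (hμ : IsSCC μ)
    (hmulti : ∀ T S : Finset X, 2 ≤ T.card → μ T S = 0) {S : Finset X} (hS : S.Nonempty) :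
    ∑ y ∈ S, μ {y} S = 1 := by
  rw [← hμ.2.1 S hS, ← sum_image (f := fun T => μ T S) singleton_injective.injOn]
  refine sum_subset (fun T hT => ?_) fun T hT hTS => hmulti T S ?_
  · obtain ⟨y, hy, rfl⟩ := mem_image.1 hT
    simpa using hy
  · simp only [mem_filter, mem_powerset] at hT
    rcases hT.2.exists_eq_singleton_or_nontrivial with ⟨z, rfl⟩ | hT'
    · exact absurd (mem_image_of_mem _ (singleton_subset_iff.1 hT.1)) hTS
    · exact one_lt_card_iff_nontrivial.2 hT'

theorem SingletonRep.apply_singleton (h : SingletonRep μ)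
    (hμ : IsSCC μ) {x : X} {S : Finset X} (hx : x ∈ S) :
    μ {x} S = μ {x} univ / ∑ y ∈ S, μ {y} univ := by
  have hw (y : X) : 0 < μ {y} univ := h.1 y univ (mem_univ y)
  rw [eq_div_iff (sum_pos (fun y _ => hw y) ⟨x, hx⟩).ne']
  calc μ {x} S * ∑ y ∈ S, μ {y} univ
      = ∑ y ∈ S, μ {x} univ * μ {y} S := by
        rw [mul_sum]
        refine sum_congr rfl fun y hy => ?_
        have hratio := h.2.2 x y S univ hx hy (mem_univ x) (mem_univ y)
        rwa [div_eq_div_iff (h.1 y S hy).ne' (hw y).ne'] at hratio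
    _ = μ {x} univ := by rw [← mul_sum, sum_apply_singleton_eq_one hμ h.2.1 ⟨x, hx⟩, mul_one]

end Luce

theorem rrm_and_nsc_iff_singleton_general (μ : Finset X → Finset X → ℝ)
    (hμ : IsSCC μ) :
    (RRMRep μ ∧ NSCRep μ) ↔ SingletonRep μ := by
  constructor
  · rintro ⟨⟨s, Q, hR⟩, q, N, σ, hN⟩
    obtain rfl := hR.eq_singleton_of_isNSC hN
    exact hR.singletonRep hμ.2.2
  · intro h
    have hR := isRRM_singleton_of_luce (fun x => h.1 x univ (mem_univ x))
      (fun x S hx => h.apply_singleton hμ hx) h.2.1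
    exact ⟨⟨_, _, hR⟩, _, _, _, hR.isNSC_singleton⟩

theorem rrm_and_nsc_iff_singleton (μ : Finset X → Finset X → ℝ)
    (hcard : 3 ≤ Fintype.card X) (hμ : IsSCC μ) :
    (RRMRep μ ∧ NSCRep μ) ↔ SingletonRep μ :=
  rrm_and_nsc_iff_singleton_general μ hμ
end

section
/- A stochastic choice correspondence μ with an NSC representation has a nest-invariant NSC representation if and only if μ satisfies the probabilistic attention filter property: for x ∈ S and nonempty T ⊆ S\{x}, μ(T,S) = μ(T,S\{x}) whenever μ({x},S) = 0, μ(T,S) > 0, and μ(T,S\{x}) > 0. -/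
open Finset

variable {X : Type*} [Fintype X] [DecidableEq X]

/-- A nest-invariant NSC representation: the weighting function is constant on
nonempty subsets of each nest. -/
def NestInvRep (μ : Finset X → Finset X → ℝ) : Prop :=
  ∃ (q : ℕ) (N : Fin q → Finset X) (σ : Finset X → ℝ), IsNSC μ q N σ ∧
    ∀ (i : Fin q) (T T' : Finset X), T.Nonempty → T'.Nonempty →
      T ⊆ N i → T' ⊆ N i → σ T = σ T'

def ProbAttFilter (μ : Finset X → Finset X → ℝ) : Prop :=
  ∀ (x : X) (S T : Finset X), x ∈ S → T.Nonempty → T ⊆ S.erase x →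
    μ {x} S = 0 → 0 < μ T S → 0 < μ T (S.erase x) →
    μ T S = μ T (S.erase x)

/-!
In an NSC representation, `μ (N i ∩ S) S` is the share of `σ (N i ∩ S)` in
`D S = ∑ j, σ (N j ∩ S)`. If `σ` is nest-invariant, `D S` only depends on which nests meet `S`;
when `μ {x} S = 0`, the set `{x}` is not a whole `N k ∩ S`, so removing `x` keeps the same nests,
and no share changes: this is the attention filter property.

Conversely, let `x ∈ N k ∩ S` with `N k ∩ (S \ {x})` nonempty and some other nest `N j` meeting
`S \ {x}`. Applying the attention filter to `T = N j ∩ S` gives `D (S \ {x}) = D S`, hence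
`σ (N k ∩ (S \ {x})) = σ (N k ∩ S)`. Descending from `S = X` one element at a time gives
`σ (N i ∩ S) = σ (N i)` whenever `S` meets at least two nests. Hence replacing `σ T` by the
weight of the union of the nests meeting `T` changes no share, and this new weight is
nest-invariant.
-/

open Function

section Partition

variable {ι α : Type*} {N : ι → Finset α}

def IsNestInvariant {β : Type*} (N : ι → Finset α) (σ : Finset α → β) : Prop :=
  ∀ (i : ι) (T T' : Finset α), T.Nonempty → T'.Nonempty → T ⊆ N i → T' ⊆ N i → σ T = σ T'

lemma eq_of_mem_of_pairwise_disjoint (hN : Pairwise (Disjoint on N)) {x : α} {i j : ι}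
    (hi : x ∈ N i) (hj : x ∈ N j) : i = j := by
  by_contra hij
  exact disjoint_left.mp (hN hij) hi hj

variable [DecidableEq α]

lemma inter_erase_of_notMem {A S : Finset α} {x : α} (hx : x ∉ A) : A ∩ S.erase x = A ∩ S := by
  rw [inter_erase, erase_eq_of_notMem fun hxAS => hx (mem_inter.mp hxAS).1]

variable [Fintype ι]

lemma sum_mul_indicator_inter (hN : Pairwise (Disjoint on N)) {S T : Finset α}
    (hT : T.Nonempty) {i : ι} (hi : T = N i ∩ S) (c : ι → ℝ) :
    ∑ j, c j * (if T = N j ∩ S then 1 else 0) = c i := by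
  refine (sum_eq_single i (fun j _ hji => ?_) (by simp)).trans (by simp [hi])
  obtain ⟨y, hy⟩ := hT
  rw [if_neg, mul_zero]
  intro hj
  exact hji (eq_of_mem_of_pairwise_disjoint hN (mem_inter.mp (hj ▸ hy)).1
    (mem_inter.mp (hi ▸ hy)).1)

lemma sum_inter_sub_sum_inter_erase (hN : Pairwise (Disjoint on N)) (ρ : Finset α → ℝ)
    {x : α} {k : ι} (hxk : x ∈ N k) (S : Finset α) :
    ∑ j, ρ (N j ∩ S) - ∑ j, ρ (N j ∩ S.erase x) = ρ (N k ∩ S) - ρ (N k ∩ S.erase x) := by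
  rw [← sum_sub_distrib]
  refine sum_eq_single k (fun j _ hjk => ?_) (by simp)
  rw [inter_erase_of_notMem fun hxj => hjk (eq_of_mem_of_pairwise_disjoint hN hxj hxk), sub_self]

lemma share_eq_one {ρ : Finset α → ℝ} (hρ : ρ ∅ = 0) {S : Finset α} {i : ι}
    (hi : ρ (N i ∩ S) ≠ 0) (hothers : ∀ j ≠ i, N j ∩ S = ∅) :
    ρ (N i ∩ S) / ∑ j, ρ (N j ∩ S) = 1 := by
  rw [sum_eq_single i (fun j _ hj => by rw [hothers j hj, hρ]) (by simp), div_self hi]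

def nestSaturation (N : ι → Finset α) (T : Finset α) : Finset α :=
  (univ.filter fun i => (N i ∩ T).Nonempty).biUnion N

lemma nestSaturation_empty : nestSaturation N ∅ = ∅ := by
  simp [nestSaturation]

lemma subset_nestSaturation (hcov : ∀ x, ∃ k, x ∈ N k) (T : Finset α) :
    T ⊆ nestSaturation N T := by
  intro x hxT
  obtain ⟨k, hxk⟩ := hcov x
  exact mem_biUnion.mpr ⟨k, mem_filter.mpr ⟨mem_univ k, x, mem_inter.mpr ⟨hxk, hxT⟩⟩, hxk⟩

lemma nestSaturation_eq_of_subset (hN : Pairwise (Disjoint on N)) {T : Finset α}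
    (hT : T.Nonempty) {i : ι} (hTi : T ⊆ N i) : nestSaturation N T = N i := by
  have hmeets : ∀ j, (N j ∩ T).Nonempty ↔ j = i := by
    refine fun j => ⟨fun ⟨y, hy⟩ => ?_, fun hji => ?_⟩
    · exact eq_of_mem_of_pairwise_disjoint hN (mem_inter.mp hy).1 (hTi (mem_inter.mp hy).2)
    · rwa [hji, inter_eq_right.mpr hTi]
  have hfilter : univ.filter (fun j => (N j ∩ T).Nonempty) = {i} := by
    ext j
    simp only [mem_filter, mem_univ, true_and, mem_singleton, hmeets]
  rw [nestSaturation, hfilter, singleton_biUnion]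

lemma isNestInvariant_comp_nestSaturation {β : Type*} (hN : Pairwise (Disjoint on N))
    (σ : Finset α → β) : IsNestInvariant N (fun T => σ (nestSaturation N T)) := by
  intro i T T' hT hT' hTi hT'i
  dsimp only
  rw [nestSaturation_eq_of_subset hN hT hTi, nestSaturation_eq_of_subset hN hT' hT'i]

end Partition

variable {q : ℕ} {N : Fin q → Finset X} {σ τ : Finset X → ℝ} {μ : Finset X → Finset X → ℝ}

namespace IsNSC

lemma pairwise_disjoint (h : IsNSC μ q N σ) : Pairwise (Disjoint on N) := h.2.1

lemma weight_empty (h : IsNSC μ q N σ) : σ ∅ = 0 := h.2.2.2.1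

lemma weight_pos (h : IsNSC μ q N σ) {T : Finset X} (hT : T.Nonempty) : 0 < σ T :=
  h.2.2.2.2.1 T hT

lemma exists_mem_s18 (h : IsNSC μ q N σ) (x : X) : ∃ k, x ∈ N k := by
  have hx : x ∈ univ.biUnion N := h.2.2.1 ▸ mem_univ x
  simpa only [mem_biUnion, mem_univ, true_and] using hx

lemma weight_nonneg (h : IsNSC μ q N σ) (T : Finset X) : 0 ≤ σ T := by
  rcases T.eq_empty_or_nonempty with rfl | hT
  · exact h.weight_empty.ge
  · exact (h.weight_pos hT).le

lemma sum_weight_pos (h : IsNSC μ q N σ) {S : Finset X} {i : Fin q} (hi : (N i ∩ S).Nonempty) :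
    0 < ∑ j, σ (N j ∩ S) :=
  sum_pos' (fun _ _ => h.weight_nonneg _) ⟨i, mem_univ i, h.weight_pos hi⟩

lemma apply_of_eq_inter (h : IsNSC μ q N σ) {S T : Finset X} (hT : T.Nonempty) {i : Fin q}
    (hi : T = N i ∩ S) : μ T S = σ T / ∑ j, σ (N j ∩ S) := by
  rw [h.2.2.2.2.2 T S hT (hi ▸ inter_subset_right),
    sum_mul_indicator_inter h.pairwise_disjoint hT hi, ← hi]

lemma apply_pos_of_eq_inter (h : IsNSC μ q N σ) {S T : Finset X} (hT : T.Nonempty) {i : Fin q}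
    (hi : T = N i ∩ S) : 0 < μ T S := by
  rw [h.apply_of_eq_inter hT hi]
  exact div_pos (h.weight_pos hT) (h.sum_weight_pos (hi ▸ hT))

lemma apply_eq_zero (h : IsNSC μ q N σ) {S T : Finset X} (hT : T.Nonempty) (hTS : T ⊆ S)
    (hne : ∀ i, T ≠ N i ∩ S) : μ T S = 0 := by
  rw [h.2.2.2.2.2 T S hT hTS]
  exact sum_eq_zero fun i _ => by rw [if_neg (hne i), mul_zero]

lemma apply_of_pos (h : IsNSC μ q N σ) {S T : Finset X} (hT : T.Nonempty) (hTS : T ⊆ S)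
    (hpos : 0 < μ T S) : μ T S = σ T / ∑ j, σ (N j ∩ S) := by
  by_cases hex : ∃ i, T = N i ∩ S
  · obtain ⟨i, hi⟩ := hex
    exact h.apply_of_eq_inter hT hi
  · exact absurd (h.apply_eq_zero hT hTS (not_exists.mp hex)) hpos.ne'

lemma of_shares_eq (h : IsNSC μ q N σ) (hτ₀ : τ ∅ = 0) (hτ : ∀ T : Finset X, T.Nonempty → 0 < τ T)
    (hshare : ∀ (S : Finset X) (i : Fin q), (N i ∩ S).Nonempty →
      τ (N i ∩ S) / ∑ j, τ (N j ∩ S) = σ (N i ∩ S) / ∑ j, σ (N j ∩ S)) :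
    IsNSC μ q N τ := by
  obtain ⟨hne, hN, hcov, -, -, hform⟩ := h
  refine ⟨hne, hN, hcov, hτ₀, hτ, fun T S hT hTS => (hform T S hT hTS).trans
    (sum_congr rfl fun i _ => ?_)⟩
  split_ifs with hi
  · rw [hshare S i (hi ▸ hT)]
  · simp

lemma sum_weight_inter_erase_eq (h : IsNSC μ q N σ) (hinv : IsNestInvariant N σ)
    {S : Finset X} {x : X} (hx : μ {x} S = 0) :
    ∑ j, σ (N j ∩ S.erase x) = ∑ j, σ (N j ∩ S) := by
  refine sum_congr rfl fun j _ => ?_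
  rw [inter_erase]
  rcases ((N j ∩ S).erase x).eq_empty_or_nonempty with hempty | hne
  · rcases (erase_eq_empty_iff _ _).mp hempty with hj | hsingle
    · rw [hj, erase_empty]
    · exact absurd hx (h.apply_pos_of_eq_inter (singleton_nonempty x) hsingle.symm).ne'
  · exact hinv j _ _ hne (hne.mono (erase_subset _ _))
      ((erase_subset _ _).trans inter_subset_left) inter_subset_left

lemma probAttFilter (h : IsNSC μ q N σ) (hinv : IsNestInvariant N σ) : ProbAttFilter μ := by
  intro x S T _ hT hTS hx hpos hpos'
  rw [h.apply_of_pos hT (hTS.trans (erase_subset x S)) hpos, h.apply_of_pos hT hTS hpos',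
    h.sum_weight_inter_erase_eq hinv hx]

lemma weight_inter_erase_eq (h : IsNSC μ q N σ) (hpaf : ProbAttFilter μ) {S : Finset X}
    {x : X} {j k : Fin q} (hxS : x ∈ S) (hxk : x ∈ N k) (hjk : j ≠ k)
    (hj : (N j ∩ S.erase x).Nonempty) (hk : (N k ∩ S.erase x).Nonempty) :
    σ (N k ∩ S.erase x) = σ (N k ∩ S) := by
  have hjS : N j ∩ S.erase x = N j ∩ S := inter_erase_of_notMem fun hxj =>
    hjk (eq_of_mem_of_pairwise_disjoint h.pairwise_disjoint hxj hxk)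
  have hx : μ {x} S = 0 := by
    refine h.apply_eq_zero (singleton_nonempty x) (singleton_subset_iff.mpr hxS) fun i hi => ?_
    obtain rfl : i = k := eq_of_mem_of_pairwise_disjoint h.pairwise_disjoint
      (mem_inter.mp (hi ▸ mem_singleton_self x)).1 hxk
    rw [inter_erase, ← hi, erase_singleton] at hk
    exact not_nonempty_empty hk
  have hshare := hpaf x S _ hxS hj inter_subset_right hx (h.apply_pos_of_eq_inter hj hjS)
    (h.apply_pos_of_eq_inter hj rfl)
  rw [h.apply_of_eq_inter hj hjS, h.apply_of_eq_inter hj rfl, div_eq_mul_inv, div_eq_mul_inv,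
    mul_right_inj' (h.weight_pos hj).ne', inv_inj] at hshare
  linarith [sum_inter_sub_sum_inter_erase h.pairwise_disjoint σ hxk S]

lemma weight_inter_eq_weight (h : IsNSC μ q N σ) (hpaf : ProbAttFilter μ) {S : Finset X}
    {i j : Fin q} (hij : i ≠ j) (hi : (N i ∩ S).Nonempty) (hj : (N j ∩ S).Nonempty) :
    σ (N i ∩ S) = σ (N i) := by
  suffices key : ∀ (U : Finset X) (i j : Fin q), i ≠ j → (N i ∩ Uᶜ).Nonempty →
      (N j ∩ Uᶜ).Nonempty → σ (N i ∩ Uᶜ) = σ (N i) by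
    rw [← compl_compl S] at hi hj ⊢
    exact key Sᶜ i j hij hi hj
  intro U
  induction U using Finset.induction_on with
  | empty => intro i _ _ _ _; rw [compl_empty, inter_univ]
  | insert x U hxU ih =>
    intro i j hij hi hj
    rw [compl_insert] at hi hj ⊢
    have hmono : ∀ l, (N l ∩ Uᶜ.erase x).Nonempty → (N l ∩ Uᶜ).Nonempty :=
      fun l hl => hl.mono (inter_subset_inter_left (erase_subset x _))
    obtain ⟨k, hxk⟩ := h.exists_mem_s18 x
    rcases eq_or_ne i k with rfl | hik
    · rw [h.weight_inter_erase_eq hpaf (mem_compl.mpr hxU) hxk hij.symm hj hi]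
      exact ih i j hij (hmono i hi) (hmono j hj)
    · rw [inter_erase_of_notMem fun hxi =>
        hik (eq_of_mem_of_pairwise_disjoint h.pairwise_disjoint hxi hxk)] at hi ⊢
      exact ih i j hij hi (hmono j hj)

lemma share_nestSaturation_eq (h : IsNSC μ q N σ) (hpaf : ProbAttFilter μ) {S : Finset X}
    {i : Fin q} (hi : (N i ∩ S).Nonempty) :
    σ (nestSaturation N (N i ∩ S)) / ∑ j, σ (nestSaturation N (N j ∩ S)) =
      σ (N i ∩ S) / ∑ j, σ (N j ∩ S) := by
  have hsat : ∀ l, (N l ∩ S).Nonempty → nestSaturation N (N l ∩ S) = N l :=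
    fun l hl => nestSaturation_eq_of_subset h.pairwise_disjoint hl inter_subset_left
  by_cases hothers : ∀ j ≠ i, N j ∩ S = ∅
  · have hsat_empty : σ (nestSaturation N ∅) = 0 := by
      rw [nestSaturation_empty, h.weight_empty]
    have hsat_i : σ (nestSaturation N (N i ∩ S)) ≠ 0 := by
      rw [hsat i hi]
      exact (h.weight_pos (hi.mono inter_subset_left)).ne'
    rw [share_eq_one (ρ := fun T => σ (nestSaturation N T)) hsat_empty hsat_i hothers,
      share_eq_one h.weight_empty (h.weight_pos hi).ne' hothers]
  · push Not at hothers
    obtain ⟨j, hji, hj⟩ := hothers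
    have hagree : ∀ l, σ (nestSaturation N (N l ∩ S)) = σ (N l ∩ S) := by
      intro l
      rcases (N l ∩ S).eq_empty_or_nonempty with hl | hl
      · rw [hl, nestSaturation_empty]
      · rw [hsat l hl]
        rcases eq_or_ne l i with rfl | hli
        · exact (h.weight_inter_eq_weight hpaf hji.symm hl hj).symm
        · exact (h.weight_inter_eq_weight hpaf hli hl hi).symm
    simp only [hagree]

lemma nestInvRep (h : IsNSC μ q N σ) (hpaf : ProbAttFilter μ) : NestInvRep μ :=
  ⟨q, N, fun T => σ (nestSaturation N T),
    h.of_shares_eq (by rw [nestSaturation_empty, h.weight_empty])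
      (fun T hT => h.weight_pos (hT.mono (subset_nestSaturation h.exists_mem_s18 T)))
      (fun _ _ hi => h.share_nestSaturation_eq hpaf hi),
    isNestInvariant_comp_nestSaturation h.pairwise_disjoint σ⟩

end IsNSC

theorem nestInv_iff_paf_general (μ : Finset X → Finset X → ℝ) (hnsc : NSCRep μ) :
    NestInvRep μ ↔ ProbAttFilter μ := by
  obtain ⟨q, N, σ, h⟩ := hnsc
  exact ⟨fun ⟨_, _, _, h', hinv⟩ => h'.probAttFilter hinv, h.nestInvRep⟩

theorem nestInv_iff_paf (μ : Finset X → Finset X → ℝ)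
    (hcard : 3 ≤ Fintype.card X) (hμ : IsSCC μ) (hnsc : NSCRep μ) :
    NestInvRep μ ↔ ProbAttFilter μ :=
  nestInv_iff_paf_general μ hnsc
end
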